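/- Let R be a semiprime left noetherian ring and σ an endomorphism of R having a large image. The following are equivalent: (1) σ is injective; (2) σ maps regular elements to regular elements; (3) there exists a regular element c ∈ R with Rc ⊆ σ(R) and σ^n(c) regular in R for all n ≥ 1; (4) for every n ≥ 1, σ^n has a large image. -/

import Mathlib

universe u v

/-- The left annihilator of the set `L` in `S` is zero. -/
def LAnnZero (S : Type u) [Ring S] (L : Set S) : Prop :=
  ∀ a : S, (∀ x ∈ L, a * x = 0) → a = 0

/-- The right annihilator of the set `L` in `S` is zero. -/
def RAnnZero (S : Type u) [Ring S] (L : Set S) : Prop :=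
  ∀ a : S, (∀ x ∈ L, x * a = 0) → a = 0

/-- A left ideal is essential: it meets every nonzero left ideal nontrivially. -/
def IsEssentialLeftIdeal {S : Type u} [Ring S] (L : Ideal S) : Prop :=
  ∀ I : Ideal S, I ≠ ⊥ → L ⊓ I ≠ ⊥

/-- A (possibly noncommutative) ring is semiprime: `aRa = 0` implies `a = 0`. -/
def IsSemiprimeRing (S : Type u) [Ring S] : Prop :=
  ∀ a : S, (∀ r : S, a * r * a = 0) → a = 0

/-- A (possibly noncommutative) ring is prime: it is nonzero and `aRb = 0`
implies `a = 0` or `b = 0`. -/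
def IsPrimeRingE (S : Type u) [Ring S] : Prop :=
  Nontrivial S ∧ ∀ a b : S, (∀ r : S, a * r * b = 0) → a = 0 ∨ b = 0

/-- `a` is left regular: its left annihilator is zero. -/
def LeftReg {S : Type u} [Ring S] (a : S) : Prop := ∀ x : S, x * a = 0 → x = 0

/-- `a` is right regular: its right annihilator is zero. -/
def RightReg {S : Type u} [Ring S] (a : S) : Prop := ∀ x : S, a * x = 0 → x = 0

/-- `a` is regular: neither a left nor a right zero divisor. -/
def Reg {S : Type u} [Ring S] (a : S) : Prop := LeftReg a ∧ RightReg a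

/-- A self-map of a ring has large image: its range contains an essential
left ideal with zero right annihilator. -/
def HasLargeImage {S : Type u} [Ring S] (f : S → S) : Prop :=
  ∃ L : Ideal S, IsEssentialLeftIdeal L ∧ RAnnZero S (L : Set S) ∧ (L : Set S) ⊆ Set.range f

/-- The left annihilator of a set, as a left ideal. -/
def lAnnIdeal (S : Type u) [Ring S] (X : Set S) : Ideal S where
  carrier := {a | ∀ x ∈ X, a * x = 0}
  add_mem' := by intro a b ha hb x hx; rw [add_mul, ha x hx, hb x hx, add_zero]
  zero_mem' := by intro x hx; rw [zero_mul]
  smul_mem' := by intro r a ha x hx; simp only [smul_eq_mul, mul_assoc, ha x hx, mul_zero]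

/-- ACC on left annihilator ideals. -/
def AccLeftAnn (S : Type u) [Ring S] : Prop :=
  ∀ X : ℕ → Set S, (∀ n, lAnnIdeal S (X n) ≤ lAnnIdeal S (X (n + 1))) →
    ∃ N, ∀ m, N ≤ m → lAnnIdeal S (X m) = lAnnIdeal S (X N)

/-- Finite uniform (Goldie) dimension on the left: no infinite independent
family of nonzero left ideals. -/
def FinUdim (S : Type u) [Ring S] : Prop :=
  ¬ ∃ f : ℕ → Ideal S, (∀ n, f n ≠ ⊥) ∧ iSupIndep f

/-- Left Goldie ring: ACC on left annihilators and finite left uniform dimension. -/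
def IsLeftGoldie (S : Type u) [Ring S] : Prop := AccLeftAnn S ∧ FinUdim S

/-- The left uniform (Goldie) dimension of `S` is at least `n`. -/
def UdimGE (S : Type u) [Ring S] (n : ℕ) : Prop :=
  ∃ f : Fin n → Ideal S, (∀ i, f i ≠ ⊥) ∧ iSupIndep f

/-- `ι : R →+* Q` realizes `Q` as a classical left quotient ring of `R`:
`ι` is injective, regular elements become units, and every element of `Q`
is a left fraction `(ι s)⁻¹ * (ι a)` with `s` regular. -/
structure IsLeftQuotRing {R : Type u} {Q : Type v} [Ring R] [Ring Q] (ι : R →+* Q) : Prop where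
  inj : Function.Injective ι
  unit : ∀ a : R, Reg a → IsUnit (ι a)
  frac : ∀ q : Q, ∃ a s : R, Reg s ∧ ι s * q = ι a

/-- An ideal (a priori only a left ideal) is two-sided. -/
def IsTwoSided {S : Type u} [Ring S] (I : Ideal S) : Prop := ∀ x ∈ I, ∀ r : S, x * r ∈ I

/-- ACC on two-sided ideals. -/
def AccTwoSided (S : Type u) [Ring S] : Prop :=
  ∀ f : ℕ → Ideal S, (∀ n, IsTwoSided (f n)) → (∀ n, f n ≤ f (n + 1)) →
    ∃ N, ∀ m, N ≤ m → f m = f N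

/-- A trivially ordered set: no strict comparabilities. -/
def TrivOrd (P : Type u) [Preorder P] : Prop := ∀ x y : P, ¬ x < y

/-- `DevLE α P` : the deviation (in the sense of Gabriel–Rentschler) of the
poset `P` is at most `α` (where trivially ordered intervals count as having
deviation `-∞`). -/
def DevLE (α : Ordinal.{v}) (P : Type u) [Preorder P] : Prop :=
  ∀ f : ℕ → P, (∀ n, f (n + 1) ≤ f n) →
    ∃ N : ℕ, ∀ n, N ≤ n →
      TrivOrd ↥(Set.Icc (f (n + 1)) (f n)) ∨
      ∃ β, ∃ _ : β < α, DevLE β ↥(Set.Icc (f (n + 1)) (f n))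
termination_by α

/-- `R` has left Krull dimension in the sense of Gabriel–Rentschler: the
poset of left ideals of `R` has deviation. -/
def HasLeftKrullDim (R : Type u) [Ring R] : Prop :=
  ∃ α : Ordinal.{u}, DevLE α (Ideal R)

/-- `(A, ι, τ)` is a Cohn–Jordan extension of `(R, σ)`: `ι : R → A` is an
injective embedding, the automorphism `τ` of `A` extends `σ`, and every
element of `A` is mapped into `R` by some positive power of `τ`. -/
structure IsCohnJordan {R A : Type u} [Ring R] [Ring A] (σ : R →+* R) (ι : R →+* A)
    (τ : A ≃+* A) : Prop where
  inj : Function.Injective ι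
  comm : ∀ r : R, τ (ι r) = ι (σ r)
  small : ∀ a : A, ∃ n : ℕ, 1 ≤ n ∧ (⇑τ)^[n] a ∈ Set.range ι

/-!
Two facts about a semiprime left noetherian ring carry the argument: an element killed on the
left by an essential left ideal is zero, and (Goldie) every essential left ideal contains a left
regular element, which is then regular.  Given these, for (1) ⇒ (2) with `a` regular: if
`x σ(a) = 0` then `x` is killed by the essential left ideal `{d | d x ∈ L}`, and if `σ(a) x = 0`
then by `Rσ(a)`, which is essential because `Ra` is.  For (2) ⇒ (3) take a regular `c` in
`L ⊆ σ(R)`; for (3) ⇒ (4) note that `σⁿ(R)` contains `R c σ(c) ⋯ σⁿ⁻¹(c)`; and for (4) ⇒ (1),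
once the kernels of the `σⁿ` stabilise at `N`, `ker σ` meets the essential left ideal
`L ⊆ σᴺ⁺¹(R)` trivially.
-/

open Function

section Annihilators

variable {R : Type u} [Ring R]

lemma mem_lAnnIdeal_singleton {y a : R} : a ∈ lAnnIdeal R {y} ↔ a * y = 0 := by
  simp [lAnnIdeal]

def LAnnSqEq (a : R) : Prop := ∀ t : R, t * (a * a) = 0 → t * a = 0

lemma LAnnSqEq.mul_eq_zero_of_mul_add_eq_zero {a c x : R} (hc : LAnnSqEq c) (hac : a * c = 0)
    (h : x * (c + a) = 0) : x * c = 0 ∧ x * a = 0 := by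
  have hxc : x * c = 0 := hc x <| by
    rw [show x * (c * c) = x * (c + a) * c - x * (a * c) by noncomm_ring, h, hac]
    simp
  exact ⟨hxc, by rw [show x * a = x * (c + a) - x * c by noncomm_ring, h, hxc, sub_zero]⟩

lemma LAnnSqEq.add {a c : R} (hc : LAnnSqEq c) (ha : LAnnSqEq a) (hac : a * c = 0) :
    LAnnSqEq (c + a) := by
  intro x hx
  obtain ⟨h₁, h₂⟩ := hc.mul_eq_zero_of_mul_add_eq_zero (x := x * (c + a)) hac (by
    rwa [mul_assoc])
  have hxc : x * c = 0 := hc x (by simpa [add_mul, mul_add, mul_assoc, hac] using h₁)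
  have hxa : x * a = 0 := ha x (by simpa [add_mul, mul_add, ← mul_assoc, hxc] using h₂)
  rw [mul_add, hxc, hxa, add_zero]

lemma LAnnSqEq.disjoint_sup_span_lAnnIdeal_add {B : Ideal R} {a c : R} (hc : LAnnSqEq c)
    (ha : LAnnSqEq a) (hac : a * c = 0) (hB : Disjoint B (lAnnIdeal R {c})) :
    Disjoint (B ⊔ Ideal.span {a}) (lAnnIdeal R {c + a}) := by
  rw [Submodule.disjoint_def]
  rintro _ hx hxl
  obtain ⟨b, hb, _, hr, rfl⟩ := Submodule.mem_sup.1 hx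
  obtain ⟨r, rfl⟩ := Ideal.mem_span_singleton'.1 hr
  obtain ⟨h₁, h₂⟩ := hc.mul_eq_zero_of_mul_add_eq_zero hac (mem_lAnnIdeal_singleton.1 hxl)
  obtain rfl : b = 0 := Submodule.disjoint_def.1 hB b hb
    (mem_lAnnIdeal_singleton.2 (by simpa [add_mul, mul_assoc, hac] using h₁))
  simpa using ha r (by simpa [mul_assoc] using h₂)

end Annihilators

namespace IsEssentialLeftIdeal

variable {R : Type u} [Ring R] {E F I : Ideal R}

lemma mono (hE : IsEssentialLeftIdeal E) (hEF : E ≤ F) : IsEssentialLeftIdeal F :=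
  fun I hI h => hE I hI (eq_bot_iff.2 (h ▸ inf_le_inf_right I hEF))

lemma eq_bot_of_disjoint (hE : IsEssentialLeftIdeal E) (h : Disjoint E I) : I = ⊥ :=
  not_not.1 fun hI => hE I hI h.eq_bot

lemma exists_mem_inf_ne_zero (hE : IsEssentialLeftIdeal E) (hI : I ≠ ⊥) :
    ∃ x ∈ E, x ∈ I ∧ x ≠ 0 := by
  obtain ⟨x, ⟨hxE, hxI⟩, hx0⟩ := (Submodule.ne_bot_iff _).1 (hE I hI)
  exact ⟨x, hxE, hxI, hx0⟩

lemma comap_toSpanSingleton (hE : IsEssentialLeftIdeal E) (r : R) :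
    IsEssentialLeftIdeal (Submodule.comap (LinearMap.toSpanSingleton R R r) E) := by
  intro I hI
  by_cases hIr : Submodule.map (LinearMap.toSpanSingleton R R r) I = ⊥
  · rwa [inf_eq_right.2 (Submodule.map_le_iff_le_comap.1 (hIr.le.trans bot_le))]
  · obtain ⟨_, hwE, ⟨y, hyI, rfl⟩, hw0⟩ := hE.exists_mem_inf_ne_zero hIr
    exact (Submodule.ne_bot_iff _).2 ⟨y, ⟨hwE, hyI⟩, fun hy => hw0 (by simp [hy])⟩

lemma span_singleton_map {σ : R →+* R} (hσ : Injective σ) {L : Ideal R}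
    (hL : IsEssentialLeftIdeal L) (hLσ : (L : Set R) ⊆ Set.range σ) {a : R}
    (ha : IsEssentialLeftIdeal (Ideal.span {a})) : IsEssentialLeftIdeal (Ideal.span {σ a}) := by
  intro I hI
  obtain ⟨b, hbL, hbI, hb0⟩ := hL.exists_mem_inf_ne_zero hI
  obtain ⟨y, rfl⟩ := hLσ hbL
  have hy0 : Ideal.span {y} ≠ ⊥ :=
    Ideal.span_singleton_eq_bot.not.2 fun hy => hb0 (by simp [hy])
  obtain ⟨_, hwa, hwy, hw0⟩ := ha.exists_mem_inf_ne_zero hy0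
  obtain ⟨u, hu⟩ := Ideal.mem_span_singleton'.1 hwa
  obtain ⟨z, rfl⟩ := Ideal.mem_span_singleton'.1 hwy
  refine (Submodule.ne_bot_iff _).2 ⟨σ (z * y), ⟨?_, ?_⟩, (map_ne_zero_iff σ hσ).2 hw0⟩
  · exact Ideal.mem_span_singleton'.2 ⟨σ u, by rw [← map_mul, hu]⟩
  · rw [map_mul]
    exact I.smul_mem _ hbI

end IsEssentialLeftIdeal

section Noetherian

variable {R : Type u} [Ring R] [IsNoetherianRing R]

lemma isEssentialLeftIdeal_span_singleton {c : R} (hc : LeftReg c) :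
    IsEssentialLeftIdeal (Ideal.span {c}) := by
  intro I hI hcI
  have hinj : Injective ((LinearMap.toSpanSingleton R R c).coprod I.subtype) := by
    rw [← LinearMap.ker_eq_bot, LinearMap.ker_coprod_of_disjoint_range, Submodule.ker_subtype,
      LinearMap.ker_eq_bot'.2 fun x hx => hc x (by simpa using hx), Submodule.prod_bot]
    rw [LinearMap.range_toSpanSingleton, Submodule.range_subtype]
    exact disjoint_iff.2 hcI
  exact hI (Submodule.subsingleton_iff_eq_bot.1
    (IsNoetherian.subsingleton_of_prod_injective _ hinj))

lemma exists_lAnnIdeal_maximal {S : Set R} (hS : S.Nonempty) :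
    ∃ b ∈ S, ∀ c ∈ S,
      lAnnIdeal R {b} ≤ lAnnIdeal R {c} → lAnnIdeal R {c} ≤ lAnnIdeal R {b} := by
  obtain ⟨_, ⟨b, hb, rfl⟩, hmax⟩ := set_has_maximal_iff_noetherian.2 ‹_›
    ((fun b => lAnnIdeal R {b}) '' S) (hS.image _)
  exact ⟨b, hb, fun c hc hle => (hle.lt_or_eq.resolve_left (hmax _ ⟨c, hc, rfl⟩)).ge⟩

lemma hasLargeImage_of_reg {f : R → R} {d : R} (hd : Reg d)
    (hf : ∀ r : R, r * d ∈ Set.range f) :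
    HasLargeImage f := by
  refine ⟨Ideal.span {d}, isEssentialLeftIdeal_span_singleton hd.1,
    fun a ha => hd.2 a (ha d (Ideal.mem_span_singleton_self d)), fun x hx => ?_⟩
  obtain ⟨r, rfl⟩ := Ideal.mem_span_singleton'.1 hx
  exact hf r

lemma injective_of_hasLargeImage_iterate {σ : R →+* R}
    (h : ∀ n, 1 ≤ n → HasLargeImage σ^[n]) :
    Injective σ := by
  have hmono : Monotone fun n => RingHom.ker (σ ^ n) :=
    monotone_nat_of_le_succ fun n x hx => by
      simp_all [RingHom.mem_ker, pow_succ']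
  obtain ⟨N, hN⟩ : ∃ N, ∀ m, N ≤ m → RingHom.ker (σ ^ N) = RingHom.ker (σ ^ m) :=
    monotone_stabilizes_iff_noetherian.2 ‹_› ⟨_, hmono⟩
  obtain ⟨L, hL, -, hLσ⟩ := h (N + 1) (by omega)
  refine (injective_iff_map_eq_zero σ).2 fun a ha => ?_
  suffices Ideal.span {a} = ⊥ from Ideal.span_singleton_eq_bot.1 this
  refine hL.eq_bot_of_disjoint (Submodule.disjoint_def.2 fun b hbL hba => ?_)
  obtain ⟨y, rfl⟩ := hLσ hbL
  obtain ⟨u, hu⟩ := Ideal.mem_span_singleton'.1 hba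
  have hy : y ∈ RingHom.ker (σ ^ (N + 2)) := by
    rw [RingHom.mem_ker, RingHom.coe_pow, iterate_succ_apply', ← hu, map_mul, ha, mul_zero]
  rw [← (hN (N + 2) (by omega)), hN (N + 1) (by omega), RingHom.mem_ker, RingHom.coe_pow] at hy
  exact hy

end Noetherian

namespace IsSemiprimeRing

variable {R : Type u} [Ring R] [IsNoetherianRing R]

lemma eq_zero_of_essential_mul_eq_zero (hsp : IsSemiprimeRing R) {E : Ideal R}
    (hE : IsEssentialLeftIdeal E) {x : R} (hx : ∀ e ∈ E, e * x = 0) : x = 0 := by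
  by_contra hx0
  obtain ⟨y, ⟨hy0, hy⟩, hmax⟩ := exists_lAnnIdeal_maximal
    (S := {y : R | y ≠ 0 ∧ IsEssentialLeftIdeal (lAnnIdeal R {y})})
    ⟨x, hx0, hE.mono fun e he => mem_lAnnIdeal_singleton.2 (hx e he)⟩
  refine hy0 (hsp y fun r => by_contra fun hyry => ?_)
  have hle : lAnnIdeal R {y} ≤ lAnnIdeal R {y * r * y} := fun t ht => by
    rw [mem_lAnnIdeal_singleton] at ht ⊢
    rw [← mul_assoc, ← mul_assoc, ht, zero_mul, zero_mul]
  have hry : IsEssentialLeftIdeal (lAnnIdeal R {r * y}) := by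
    convert hy.comap_toSpanSingleton r using 1
    ext t
    simp [mem_lAnnIdeal_singleton, mul_assoc]
  obtain ⟨_, hsry, hsy, hsy0⟩ :=
    hry.exists_mem_inf_ne_zero (I := Ideal.span {y}) (Ideal.span_singleton_eq_bot.not.2 hy0)
  obtain ⟨s, rfl⟩ := Ideal.mem_span_singleton'.1 hsy
  refine hsy0 (mem_lAnnIdeal_singleton.1 (hmax _ ⟨hyry, hy.mono hle⟩ hle ?_))
  simpa [mem_lAnnIdeal_singleton, mul_assoc] using hsry

lemma rightReg_of_isEssentialLeftIdeal_span (hsp : IsSemiprimeRing R) {c : R}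
    (hc : IsEssentialLeftIdeal (Ideal.span {c})) : RightReg c := fun x hx =>
  hsp.eq_zero_of_essential_mul_eq_zero hc fun e he => by
    obtain ⟨s, rfl⟩ := Ideal.mem_span_singleton'.1 he
    rw [mul_assoc, hx, mul_zero]

lemma reg_of_leftReg (hsp : IsSemiprimeRing R) {c : R} (hc : LeftReg c) : Reg c :=
  ⟨hc, hsp.rightReg_of_isEssentialLeftIdeal_span (isEssentialLeftIdeal_span_singleton hc)⟩

lemma eq_zero_of_forall_isNilpotent_mul (hsp : IsSemiprimeRing R) {a : R}
    (ha : ∀ s, IsNilpotent (a * s)) : a = 0 := by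
  by_contra ha0
  obtain ⟨b, ⟨hb0, hb⟩, hmax⟩ := exists_lAnnIdeal_maximal
    (S := {b : R | b ≠ 0 ∧ ∀ s, IsNilpotent (b * s)}) ⟨a, ha0, ha⟩
  refine hb0 (hsp b fun t => ?_)
  -- every nonzero power `(bt)ʲ⁺¹ = b · t(bt)ʲ` has the same left annihilator as `b`
  have key : ∀ j, (b * t) ^ (j + 1) = 0 → b * t * b = 0 := by
    intro j
    induction j with
    | zero => simp +contextual
    | succ j ih =>
      intro hj
      by_cases hj' : (b * t) ^ (j + 1) = 0
      · exact ih hj'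
      have hpow : (b * t) ^ (j + 1) = b * (t * (b * t) ^ j) := by rw [pow_succ', mul_assoc]
      have hle : lAnnIdeal R {b} ≤ lAnnIdeal R {(b * t) ^ (j + 1)} := fun u hu => by
        rw [mem_lAnnIdeal_singleton] at hu ⊢
        rw [hpow, ← mul_assoc, hu, zero_mul]
      have hS : (b * t) ^ (j + 1) ∈ {b : R | b ≠ 0 ∧ ∀ s, IsNilpotent (b * s)} :=
        ⟨hj', fun s => by rw [hpow, mul_assoc]; exact hb _⟩
      exact mem_lAnnIdeal_singleton.1 <| hmax _ hS hle <|
        mem_lAnnIdeal_singleton.2 (by rw [← pow_succ']; exact hj)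
  obtain ⟨n, hn⟩ := hb t
  exact key n (by rw [pow_succ, hn, zero_mul])

lemma exists_mem_ne_zero_lAnnSqEq (hsp : IsSemiprimeRing R) {M : Ideal R} (hM : M ≠ ⊥) :
    ∃ a ∈ M, a ≠ 0 ∧ LAnnSqEq a := by
  obtain ⟨x, hxM, hx⟩ : ∃ x ∈ M, ¬IsNilpotent x := by
    by_contra! h
    obtain ⟨x, hxM, hx0⟩ := (Submodule.ne_bot_iff M).1 hM
    refine hx0 (hsp.eq_zero_of_forall_isNilpotent_mul fun s => ?_)
    obtain ⟨m, hm⟩ := h (s * x) (M.smul_mem s hxM)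
    exact ⟨m + 1, by rw [pow_succ, ← mul_assoc, mul_pow_mul, hm, mul_zero, zero_mul]⟩
  have hmono : Monotone fun n => lAnnIdeal R {x ^ n} :=
    monotone_nat_of_le_succ fun n t ht => by
      rw [mem_lAnnIdeal_singleton] at ht ⊢
      rw [pow_succ, ← mul_assoc, ht, zero_mul]
  obtain ⟨N, hN⟩ := monotone_stabilizes_iff_noetherian.2 ‹_› ⟨_, hmono⟩
  refine ⟨x ^ (N + 1), by rw [pow_succ]; exact M.smul_mem _ hxM, fun h => hx ⟨_, h⟩,
    fun t ht => ?_⟩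
  have h₂ : t ∈ lAnnIdeal R {x ^ (2 * N + 2)} := by
    rw [mem_lAnnIdeal_singleton, ← ht, ← pow_add]
    ring_nf
  have h₁ : lAnnIdeal R {x ^ (N + 1)} = lAnnIdeal R {x ^ (2 * N + 2)} :=
    (hN (N + 1) (by omega)).symm.trans (hN _ (by omega))
  exact mem_lAnnIdeal_singleton.1 (h₁ ▸ h₂)

/-- Goldie's argument: enlarge `c ∈ E` by elements `a ∈ E ∩ lAnn(c)` with `LAnnSqEq a`. Then
`lAnn(c + a) = lAnn(c) ∩ lAnn(a)`, and a left ideal `B` meeting `lAnn(c)` trivially can be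
enlarged to `B + Ra`, so a maximal such `B` forces `lAnn(c) = 0`. -/
lemma exists_leftReg_mem (hsp : IsSemiprimeRing R) {E : Ideal R} (hE : IsEssentialLeftIdeal E) :
    ∃ c ∈ E, LeftReg c := by
  obtain ⟨B, ⟨c, hcE, hc, hBc⟩, hmax⟩ := set_has_maximal_iff_noetherian.2 ‹_›
    {B : Ideal R | ∃ c ∈ E, LAnnSqEq c ∧ Disjoint B (lAnnIdeal R {c})}
    ⟨⊥, 0, E.zero_mem, fun t _ => mul_zero t, disjoint_bot_left⟩
  refine ⟨c, hcE, fun x hx => ?_⟩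
  suffices hc0 : lAnnIdeal R {c} = ⊥ from
    (Submodule.mem_bot R).1 (hc0 ▸ mem_lAnnIdeal_singleton.2 hx)
  by_contra hne
  obtain ⟨a, ⟨haE, hac⟩, ha0, ha⟩ := hsp.exists_mem_ne_zero_lAnnSqEq (hE _ hne)
  have haB : a ∉ B := fun haB => ha0 (Submodule.disjoint_def.1 hBc a haB hac)
  replace hac : a * c = 0 := mem_lAnnIdeal_singleton.1 hac
  refine hmax _ ⟨c + a, add_mem hcE haE, hc.add ha hac,
    hc.disjoint_sup_span_lAnnIdeal_add ha hac hBc⟩ (lt_of_le_of_ne le_sup_left fun h => haB ?_)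
  exact h ▸ Submodule.mem_sup_right (Submodule.mem_span_singleton_self a)

lemma reg_map_of_injective (hsp : IsSemiprimeRing R) {σ : R →+* R}
    (hli : HasLargeImage σ)     (hσ : Injective σ) {a : R} (ha : LeftReg a) : Reg (σ a) := by
  obtain ⟨L, hL, -, hLσ⟩ := hli
  refine ⟨fun x hx => ?_, hsp.rightReg_of_isEssentialLeftIdeal_span
    (hL.span_singleton_map hσ hLσ (isEssentialLeftIdeal_span_singleton ha))⟩
  refine hsp.eq_zero_of_essential_mul_eq_zero (hL.comap_toSpanSingleton x) fun d hd => ?_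
  obtain ⟨y, hy⟩ := hLσ hd
  replace hy : σ y = d * x := hy
  obtain rfl : y = 0 := ha y (hσ (by rw [map_mul, hy, mul_assoc, hx, mul_zero, map_zero]))
  rw [← hy, map_zero]

lemma exists_reg_iterate_reg (hsp : IsSemiprimeRing R) {σ : R →+* R}
    (hli : HasLargeImage σ)     (hreg : ∀ a, Reg a → Reg (σ a)) :
    ∃ c : R, (∀ r : R, r * c ∈ Set.range σ) ∧ ∀ n, Reg (σ^[n] c) := by
  obtain ⟨L, hL, -, hLσ⟩ := hli
  obtain ⟨c, hcL, hc⟩ := hsp.exists_leftReg_mem hL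
  exact ⟨c, fun r => hLσ (L.smul_mem r hcL), Iterate.rec _ (hsp.reg_of_leftReg hc) hreg⟩

end IsSemiprimeRing

section IterateProd

variable {R : Type u} [Ring R] (σ : R →+* R) (c : R)

/-- `iterateProd σ c n = c σ(c) ⋯ σⁿ⁻¹(c)`. -/
def iterateProd : ℕ → R
  | 0 => 1
  | n + 1 => c * σ (iterateProd n)

variable {σ c}

lemma reg_iterate_iterateProd (hc : ∀ n, Reg (σ^[n] c)) (n m : ℕ) :
    Reg (σ^[m] (iterateProd σ c n)) := by
  induction n generalizing m with
  | zero =>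
    rw [iterateProd, ← RingHom.coe_pow, map_one]
    exact ⟨fun x hx => by simpa using hx, fun x hx => by simpa using hx⟩
  | succ n ih =>
    rw [iterateProd, ← RingHom.coe_pow, map_mul, RingHom.coe_pow, ← iterate_succ_apply]
    exact ⟨fun x hx => (hc m).1 x ((ih (m + 1)).1 _ (by rwa [mul_assoc])),
      fun x hx => (ih (m + 1)).2 x ((hc m).2 _ (by rwa [← mul_assoc]))⟩

lemma mul_iterateProd_mem_range (hcσ : ∀ r : R, r * c ∈ Set.range σ) (n : ℕ) (r : R) :
    r * iterateProd σ c n ∈ Set.range σ^[n] := by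
  induction n generalizing r with
  | zero => exact ⟨r * 1, rfl⟩
  | succ n ih =>
    obtain ⟨s, hs⟩ := hcσ r
    obtain ⟨t, ht⟩ := ih s
    exact ⟨t, by rw [iterate_succ_apply', ht, map_mul, hs, iterateProd, mul_assoc]⟩

lemma hasLargeImage_iterate [IsNoetherianRing R] (hcσ : ∀ r : R, r * c ∈ Set.range σ)
    (hc : ∀ n, Reg (σ^[n] c)) (n : ℕ) : HasLargeImage σ^[n] :=
  hasLargeImage_of_reg (reg_iterate_iterateProd hc n 0) (mul_iterateProd_mem_range hcσ n)

end IterateProd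

/-- For a semiprime left noetherian ring `R` and an endomorphism `σ` with
large image, the following are equivalent: (1) `σ` is injective; (2) `σ`
maps regular elements to regular elements; (3) there is a regular `c` with
`Rc ⊆ σ(R)` and `σⁿ(c)` regular for all `n ≥ 1`; (4) every `σⁿ`, `n ≥ 1`,
has large image. -/
theorem stmt13 {R : Type u} [Ring R] (hsp : IsSemiprimeRing R) [IsNoetherianRing R]
    (σ : R →+* R) (hli : HasLargeImage ⇑σ) :
    (Function.Injective σ ↔ ∀ a : R, Reg a → Reg (σ a)) ∧
    (Function.Injective σ ↔ ∃ c : R, Reg c ∧ (∀ r : R, r * c ∈ Set.range σ) ∧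
      ∀ n : ℕ, 1 ≤ n → Reg ((⇑σ)^[n] c)) ∧
    (Function.Injective σ ↔ ∀ n : ℕ, 1 ≤ n → HasLargeImage ((⇑σ)^[n])) := by
  have h12 (hσ : Injective σ) (a : R) (ha : Reg a) : Reg (σ a) :=
    hsp.reg_map_of_injective hli hσ ha.1
  have h23 (hreg : ∀ a, Reg a → Reg (σ a)) :
      ∃ c : R, Reg c ∧ (∀ r : R, r * c ∈ Set.range σ) ∧
        ∀ n : ℕ, 1 ≤ n → Reg (σ^[n] c) := by
    obtain ⟨c, hcσ, hc⟩ := hsp.exists_reg_iterate_reg hli hreg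
    exact ⟨c, hc 0, hcσ, fun n _ => hc n⟩
  have h34 : (∃ c : R, Reg c ∧ (∀ r : R, r * c ∈ Set.range σ) ∧
      ∀ n : ℕ, 1 ≤ n → Reg (σ^[n] c)) → ∀ n : ℕ, 1 ≤ n → HasLargeImage σ^[n] := by
    rintro ⟨c, hc, hcσ, hcn⟩ n -
    refine hasLargeImage_iterate hcσ (fun k => ?_) n
    cases k with
    | zero => exact hc
    | succ k => exact hcn _ k.succ_pos
  have h41 := injective_of_hasLargeImage_iterate (σ := σ)
  exact ⟨⟨h12, fun h => h41 (h34 (h23 h))⟩, ⟨fun h => h23 (h12 h), fun h => h41 (h34 h)⟩,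
    ⟨fun h => h34 (h23 (h12 h)), h41⟩⟩
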